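/- arXiv:math/0401368 — 2 statements merged into one kernel-verified Lean document; each statement's English description precedes it below -/
import Mathlib

section
/- If g : [0,∞) → ℝ is Lipschitz with constant L, then for any probability densities p, q with respect to μ (with p > 0 a.e.), |∫ (q - p)·g(q/p) dμ| ≤ L·∫ (q - p)²/p dμ. -/
/-!
Since `∫ (q - p) dμ = 0`, the constant `g 1` may be subtracted from `g (q / p)` for free. Pointwise,
`|g (q / p) - g 1| ≤ L |q / p - 1| = L |q - p| / p`, so the integrand is then dominated by
`L (q - p)² / p`.
-/

open Set MeasureTheory

theorem abs_sub_mul_le_of_abs_le_mul_abs_div_sub_one {a b u L : ℝ} (ha : 0 < a)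
    (hu : |u| ≤ L * |b / a - 1|) :
    |(b - a) * u| ≤ L * ((b - a) ^ 2 / a) := by
  have hdiv : |b / a - 1| = |b - a| / a := by
    rw [div_sub' ha.ne', abs_div, abs_of_pos ha, mul_one]
  calc |(b - a) * u| = |b - a| * |u| := abs_mul _ _
    _ ≤ |b - a| * (L * (|b - a| / a)) := by
      rw [← hdiv]; exact mul_le_mul_of_nonneg_left hu (abs_nonneg _)
    _ = L * ((b - a) ^ 2 / a) := by
      rw [← sq_abs (b - a)]; ring

theorem integral_mul_sub_const_of_integral_eq_zero {X : Type*} [MeasurableSpace X]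
    {μ : Measure X} {f h : X → ℝ} (c : ℝ) (hf : Integrable f μ)
    (hfh : Integrable (fun x => f x * h x) μ) (hf0 : ∫ x, f x ∂μ = 0) :
    ∫ x, f x * (h x - c) ∂μ = ∫ x, f x * h x ∂μ := by
  simp_rw [mul_sub]
  rw [integral_sub hfh (hf.mul_const c), integral_mul_const, hf0, zero_mul, sub_zero]

theorem delta_divergence_bound_lipschitz_general
    {X : Type*} [MeasurableSpace X] (μ : Measure X)
    (p q : X → ℝ) (g : ℝ → ℝ) (L : ℝ)
    (hq0 : ∀ x, 0 ≤ q x)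
    (hppos : ∀ᵐ x ∂μ, 0 < p x)
    (hp : Integrable p μ) (hq : Integrable q μ)
    (hp1 : ∫ x, p x ∂μ = 1) (hq1 : ∫ x, q x ∂μ = 1)
    (hg : ∀ t ≥ (0:ℝ), ∀ s ≥ (0:ℝ), |g t - g s| ≤ L * |t - s|)
    (hint : Integrable (fun x => (q x - p x) * g (q x / p x)) μ)
    (hint2 : Integrable (fun x => (q x - p x) ^ 2 / p x) μ) :
    |∫ x, (q x - p x) * g (q x / p x) ∂μ| ≤
      L * ∫ x, (q x - p x) ^ 2 / p x ∂μ := by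
  have hmass : ∫ x, (q x - p x) ∂μ = 0 := by
    rw [integral_sub hq hp, hp1, hq1, sub_self]
  calc |∫ x, (q x - p x) * g (q x / p x) ∂μ|
      = |∫ x, (q x - p x) * (g (q x / p x) - g 1) ∂μ| :=
        congrArg abs (integral_mul_sub_const_of_integral_eq_zero _ (hq.sub hp) hint hmass).symm
    _ ≤ ∫ x, L * ((q x - p x) ^ 2 / p x) ∂μ := by
        rw [← Real.norm_eq_abs]
        refine norm_integral_le_of_norm_le (hint2.const_mul L) ?_
        filter_upwards [hppos] with x hpx
        exact abs_sub_mul_le_of_abs_le_mul_abs_div_sub_one hpx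
          (hg _ (div_nonneg (hq0 x) hpx.le) 1 zero_le_one)
    _ = L * ∫ x, (q x - p x) ^ 2 / p x ∂μ := integral_const_mul L _

theorem delta_divergence_bound_lipschitz
    {X : Type*} [MeasurableSpace X] (μ : Measure X)
    (p q : X → ℝ) (g : ℝ → ℝ) (L : ℝ)
    (hp0 : ∀ x, 0 ≤ p x) (hq0 : ∀ x, 0 ≤ q x)
    (hppos : ∀ᵐ x ∂μ, 0 < p x)
    (hpm : Measurable p) (hqm : Measurable q) (hgm : Measurable g)
    (hp : Integrable p μ) (hq : Integrable q μ)
    (hp1 : ∫ x, p x ∂μ = 1) (hq1 : ∫ x, q x ∂μ = 1)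
    (hg : ∀ t ≥ (0:ℝ), ∀ s ≥ (0:ℝ), |g t - g s| ≤ L * |t - s|)
    (hint : Integrable (fun x => (q x - p x) * g (q x / p x)) μ)
    (hint2 : Integrable (fun x => (q x - p x) ^ 2 / p x) μ) :
    |∫ x, (q x - p x) * g (q x / p x) ∂μ| ≤
      L * ∫ x, (q x - p x) ^ 2 / p x ∂μ :=
  delta_divergence_bound_lipschitz_general μ p q g L hq0 hppos hp hq hp1 hq1 hg hint hint2
end

section
/- If g ∈ Le₁ (g(t) ≤ g(1) ≤ g(s) whenever 0 ≤ t ≤ 1 ≤ s), then for any probability densities p, q with respect to μ: δ_g(Q,P) ≥ |δ_{|g|}(Q,P)| ≥ 0. -/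
/-!
Write `c = g 1` and `t = q/p`. Since `∫ (q - p) dμ = 0`, subtracting the constant `c` from `g`
(or `|c|` from `|g|`) does not change either integral. The `Le₁` condition says that `q - p`,
which has the sign of `t - 1`, and `g t - c` have the same sign, so
`(q - p)(g t - c) = |(q - p)(g t - c)| ≥ |(q - p)(|g t| - |c|)|` pointwise, and integrating gives
the claim.
-/

open MeasureTheory

def Le1 (g : ℝ → ℝ) : Prop :=
  ∀ t s : ℝ, 0 ≤ t → t ≤ 1 → 1 ≤ s → g t ≤ g 1 ∧ g 1 ≤ g s

namespace Le1

variable {g : ℝ → ℝ}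

theorem sub_mul_sub_nonneg (hg : Le1 g) {a b : ℝ} (ha : 0 ≤ a) (hb : 0 < b) :
    0 ≤ (a - b) * (g (a / b) - g 1) := by
  rcases le_or_gt (a / b) 1 with hle | hgt
  · have hab : a ≤ b := (div_le_one hb).mp hle
    have hgle : g (a / b) ≤ g 1 := (hg _ 1 (div_nonneg ha hb.le) hle le_rfl).1
    exact mul_nonneg_of_nonpos_of_nonpos (by linarith) (by linarith)
  · have hba : b ≤ a := (one_le_div hb).mp hgt.le
    have hgge : g 1 ≤ g (a / b) := (hg 1 _ zero_le_one le_rfl hgt.le).2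
    exact mul_nonneg (by linarith) (by linarith)

theorem abs_sub_mul_abs_sub_abs_le (hg : Le1 g) {a b : ℝ} (ha : 0 ≤ a) (hb : 0 < b) :
    |(a - b) * (|g (a / b)| - |g 1|)| ≤ (a - b) * (g (a / b) - g 1) := by
  calc |(a - b) * (|g (a / b)| - |g 1|)|
      = |a - b| * |(|g (a / b)| - |g 1|)| := abs_mul _ _
    _ ≤ |a - b| * |g (a / b) - g 1| :=
        mul_le_mul_of_nonneg_left (abs_abs_sub_abs_le_abs_sub _ _) (abs_nonneg _)
    _ = (a - b) * (g (a / b) - g 1) := by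
        rw [← abs_mul, abs_of_nonneg (hg.sub_mul_sub_nonneg ha hb)]

end Le1

section Centering

variable {X : Type*} [MeasurableSpace X] {μ : Measure X} {w f : X → ℝ}

theorem integrable_mul_sub_const (hw : Integrable w μ)
    (hwf : Integrable (fun x => w x * f x) μ) (c : ℝ) :
    Integrable (fun x => w x * (f x - c)) μ := by
  simp_rw [mul_sub]
  exact hwf.sub (hw.mul_const c)

theorem integral_mul_sub_const_of_integral_eq_zero_s14 (hw : Integrable w μ) (hw0 : ∫ x, w x ∂μ = 0)
    (hwf : Integrable (fun x => w x * f x) μ) (c : ℝ) :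
    ∫ x, w x * (f x - c) ∂μ = ∫ x, w x * f x ∂μ := by
  simp only [mul_sub]
  rw [integral_sub hwf (hw.mul_const c), integral_mul_const, hw0, zero_mul, sub_zero]

end Centering

theorem delta_divergence_abs_refinement_Le1_general
    {X : Type*} [MeasurableSpace X] (μ : Measure X)
    (p q : X → ℝ) (g : ℝ → ℝ)
    (hq0 : ∀ x, 0 ≤ q x)
    (hppos : ∀ᵐ x ∂μ, 0 < p x)
    (hp : Integrable p μ) (hq : Integrable q μ)
    (hp1 : ∫ x, p x ∂μ = 1) (hq1 : ∫ x, q x ∂μ = 1)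
    (hg : ∀ t s : ℝ, 0 ≤ t → t ≤ 1 → 1 ≤ s → g t ≤ g 1 ∧ g 1 ≤ g s)
    (hint : Integrable (fun x => (q x - p x) * g (q x / p x)) μ)
    (hint2 : Integrable (fun x => (q x - p x) * |g (q x / p x)|) μ) :
    |∫ x, (q x - p x) * |g (q x / p x)| ∂μ| ≤
      ∫ x, (q x - p x) * g (q x / p x) ∂μ := by
  have hw : Integrable (fun x => q x - p x) μ := hq.sub hp
  have hw0 : ∫ x, (q x - p x) ∂μ = 0 := by rw [integral_sub hq hp, hq1, hp1, sub_self]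
  have hpointwise : ∀ᵐ x ∂μ, |(q x - p x) * (|g (q x / p x)| - |g 1|)|
      ≤ (q x - p x) * (g (q x / p x) - g 1) := by
    filter_upwards [hppos] with x hx
    exact Le1.abs_sub_mul_abs_sub_abs_le hg (hq0 x) hx
  calc |∫ x, (q x - p x) * |g (q x / p x)| ∂μ|
      = |∫ x, (q x - p x) * (|g (q x / p x)| - |g 1|) ∂μ| := by
        rw [integral_mul_sub_const_of_integral_eq_zero_s14 hw hw0 hint2]
    _ ≤ ∫ x, |(q x - p x) * (|g (q x / p x)| - |g 1|)| ∂μ := abs_integral_le_integral_abs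
    _ ≤ ∫ x, (q x - p x) * (g (q x / p x) - g 1) ∂μ :=
        integral_mono_ae (integrable_mul_sub_const hw hint2 _).abs
          (integrable_mul_sub_const hw hint _) hpointwise
    _ = ∫ x, (q x - p x) * g (q x / p x) ∂μ :=
        integral_mul_sub_const_of_integral_eq_zero_s14 hw hw0 hint _

theorem delta_divergence_abs_refinement_Le1
    {X : Type*} [MeasurableSpace X] (μ : Measure X)
    (p q : X → ℝ) (g : ℝ → ℝ)
    (hp0 : ∀ x, 0 ≤ p x) (hq0 : ∀ x, 0 ≤ q x)
    (hppos : ∀ᵐ x ∂μ, 0 < p x)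
    (hpm : Measurable p) (hqm : Measurable q) (hgm : Measurable g)
    (hp : Integrable p μ) (hq : Integrable q μ)
    (hp1 : ∫ x, p x ∂μ = 1) (hq1 : ∫ x, q x ∂μ = 1)
    (hg : ∀ t s : ℝ, 0 ≤ t → t ≤ 1 → 1 ≤ s → g t ≤ g 1 ∧ g 1 ≤ g s)
    (hint : Integrable (fun x => (q x - p x) * g (q x / p x)) μ)
    (hint2 : Integrable (fun x => (q x - p x) * |g (q x / p x)|) μ) :
    |∫ x, (q x - p x) * |g (q x / p x)| ∂μ| ≤
      ∫ x, (q x - p x) * g (q x / p x) ∂μ :=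
  delta_divergence_abs_refinement_Le1_general μ p q g hq0 hppos hp hq hp1 hq1 hg hint hint2
end
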